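/- Let 𝒜 be a finite nonempty set of attributes, each a function a : X → [0,1] on a set X of instances, and let μ be a normalized monotone measure on 𝒜 (μ(𝒜) = 1). With μ^s := (μ + μ̄)/2 the symmetrized measure, for all x, y ∈ X it holds that R^{μ^s}(x, y) = μ(𝒜) − d^{μ^s}(x, y). -/

import Mathlib

/-!
Reversing an enumeration replaces every tail set `A*_i` by the complement of a tail set, so the
Choquet sum along the reversed order is the Choquet sum for the dual measure. If `1 - d` is sorted
by `e₁`, then `d` is sorted by the reverse of `e₁`; since `μ^s` is self-dual when `μ ∅ = 0`, this
gives `R = μ^s(𝒜) - d^{μ^s}` once one knows that a Choquet sum does not depend on the sorting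
enumeration, and `μ^s(𝒜) = μ(𝒜)`.
-/

open Finset

/-- The set `{x*_k, …, x*_{n-1}}` (0-indexed): the image under the enumeration `e`
of the indices `≥ k`. -/
def upSet {X : Type*} [DecidableEq X] {n : ℕ} (e : Fin n ≃ X) (k : ℕ) : Finset X :=
  (Finset.univ.filter fun j : Fin n => k ≤ (j : ℕ)).image e

/-- The Choquet integral of `f` with respect to the set function `μ`, computed via an
enumeration `e : Fin n ≃ X` (assumed to sort `f` nondecreasingly):
`∑ i, f(x*_i) · [μ(A*_i) − μ(A*_{i+1})]` where `A*_i = {x*_i, …, x*_{n-1}}`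
(note `A*_n = ∅`, and `μ ∅ = 0` for a monotone measure). -/
def choquetSum {X : Type*} [DecidableEq X] {n : ℕ} (μ : Finset X → ℝ) (f : X → ℝ)
    (e : Fin n ≃ X) : ℝ :=
  ∑ i : Fin n, f (e i) * (μ (upSet e i) - μ (upSet e ((i : ℕ) + 1)))

/-- The dual measure `μ̄(A) := μ(X) − μ(X \ A)`. -/
def dualMeasure {X : Type*} [Fintype X] [DecidableEq X] (μ : Finset X → ℝ) :
    Finset X → ℝ :=
  fun A => μ Finset.univ - μ (Finset.univ \ A)

section

variable {X : Type*} [DecidableEq X] {n : ℕ}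

lemma mem_upSet (e : Fin n ≃ X) (k : ℕ) (x : X) : x ∈ upSet e k ↔ k ≤ (e.symm x : ℕ) := by
  simp only [upSet, mem_image, mem_filter, mem_univ, true_and]
  exact ⟨fun ⟨j, hj, hjx⟩ => hjx ▸ by simpa using hj,
    fun h => ⟨e.symm x, h, e.apply_symm_apply x⟩⟩

lemma upSet_zero [Fintype X] (e : Fin n ≃ X) : upSet e 0 = univ := by
  ext x; simp [mem_upSet]

lemma upSet_of_le (e : Fin n ≃ X) {k : ℕ} (hk : n ≤ k) : upSet e k = ∅ := by
  ext x
  simp only [mem_upSet, notMem_empty, iff_false, not_le]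
  exact (e.symm x).isLt.trans_le hk

lemma upSet_revPerm_trans [Fintype X] (e : Fin n ≃ X) (k : ℕ) :
    upSet (Fin.revPerm.trans e) k = univ \ upSet e (n - k) := by
  ext x
  have hx := (e.symm x).isLt
  simp only [mem_sdiff, mem_univ, true_and, mem_upSet, Equiv.symm_trans_apply,
    Fin.revPerm_symm, Fin.revPerm_apply, Fin.val_rev]
  omega

lemma choquetSum_revPerm_trans [Fintype X] (μ : Finset X → ℝ) (f : X → ℝ) (e : Fin n ≃ X) :
    choquetSum μ f (Fin.revPerm.trans e) = choquetSum (dualMeasure μ) f e := by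
  rw [choquetSum, choquetSum, ← Equiv.sum_comp Fin.revPerm]
  refine sum_congr rfl fun i _ => ?_
  have hi := i.isLt
  have h₁ : n - (i.rev : ℕ) = i + 1 := by rw [Fin.val_rev]; omega
  have h₂ : n - ((i.rev : ℕ) + 1) = i := by rw [Fin.val_rev]; omega
  simp only [Equiv.trans_apply, Fin.revPerm_apply, Fin.rev_rev, dualMeasure,
    upSet_revPerm_trans, h₁, h₂]
  ring

lemma dualMeasure_symmetrized [Fintype X] {μ : Finset X → ℝ} (hμ : μ ∅ = 0) :
    dualMeasure (fun S => (μ S + dualMeasure μ S) / 2) = fun S => (μ S + dualMeasure μ S) / 2 := by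
  ext S
  simp only [dualMeasure, sdiff_self, sdiff_sdiff_right_self, inf_eq_inter, univ_inter,
    bot_eq_empty, hμ]
  ring

lemma choquetSum_sub (μ : Finset X → ℝ) (f g : X → ℝ) (e : Fin n ≃ X) :
    choquetSum μ (fun x => f x - g x) e = choquetSum μ f e - choquetSum μ g e := by
  simp only [choquetSum, sub_mul, sum_sub_distrib]

lemma choquetSum_const [Fintype X] (μ : Finset X → ℝ) (c : ℝ) (e : Fin n ≃ X) :
    choquetSum μ (fun _ => c) e = c * (μ univ - μ ∅) := by
  rw [choquetSum, ← mul_sum,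
    Fin.sum_univ_eq_sum_range (fun k => μ (upSet e k) - μ (upSet e (k + 1))), sum_range_sub',
    upSet_zero, upSet_of_le e le_rfl]

lemma choquetSum_eq_by_parts [Fintype X] (μ : Finset X → ℝ) (f : X → ℝ) (e : Fin n ≃ X)
    (F : ℕ → ℝ) (hF : ∀ i : Fin n, F i = f (e i)) :
    choquetSum μ f e = F (n - 1) * (μ univ - μ ∅) -
      ∑ i ∈ range (n - 1), (F (i + 1) - F i) * (μ univ - μ (upSet e (i + 1))) := by
  have h := sum_range_by_parts F (fun k => μ (upSet e k) - μ (upSet e (k + 1))) n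
  simp only [sum_range_sub', smul_eq_mul, upSet_zero, upSet_of_le e le_rfl] at h
  rw [← h, choquetSum,
    ← Fin.sum_univ_eq_sum_range (fun k => F k * (μ (upSet e k) - μ (upSet e (k + 1))))]
  simp only [hF]

lemma upSet_eq_filter_le {α : Type*} [LinearOrder α] [Fintype X] (f : X → α) (e : Fin n ≃ X)
    (hf : Monotone (f ∘ e)) {i j : Fin n} (hij : (i : ℕ) + 1 = j) (hlt : f (e i) < f (e j)) :
    upSet e j = univ.filter fun x => f (e j) ≤ f x := by
  ext x
  simp only [mem_upSet, mem_filter, mem_univ, true_and]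
  constructor
  · intro h
    simpa using hf (show j ≤ e.symm x from h)
  · intro h
    by_contra hx
    have hxi : e.symm x ≤ i := Fin.le_def.2 (by omega)
    have := hf hxi
    simp only [Function.comp_apply, Equiv.apply_symm_apply] at this
    exact absurd (this.trans_lt hlt) h.not_gt

-- After summation by parts only the tail sets at strict increases of the (common) sorted values
-- matter, and those are level sets of `f`.
lemma choquetSum_eq_of_monotone [Fintype X] (μ : Finset X → ℝ) (f : X → ℝ) {e e' : Fin n ≃ X}
    (h : Monotone (f ∘ e)) (h' : Monotone (f ∘ e')) :
    choquetSum μ f e = choquetSum μ f e' := by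
  have hsorted : f ∘ e = f ∘ e' := by
    have := Tuple.unique_monotone (f := f ∘ e) (σ := 1) (τ := e'.trans e.symm) h
      (by simpa [Function.comp_def] using h')
    simpa [Function.comp_def] using this
  set F : ℕ → ℝ := fun k => if hk : k < n then f (e ⟨k, hk⟩) else 0
  have hF : ∀ i : Fin n, F i = f (e i) := fun i => dif_pos i.isLt
  have hF' : ∀ i : Fin n, F i = f (e' i) := fun i => (hF i).trans (congrFun hsorted i)
  rw [choquetSum_eq_by_parts μ f e F hF, choquetSum_eq_by_parts μ f e' F hF']
  congr 1
  refine sum_congr rfl fun k hk => ?_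
  have hk : k + 1 < n := by rw [mem_range] at hk; omega
  set i : Fin n := ⟨k, by omega⟩
  set j : Fin n := ⟨k + 1, hk⟩
  rcases (h (show i ≤ j from Fin.le_def.2 (by simp [i, j]))).eq_or_lt with heq | hlt
  · have hjump : F (k + 1) - F k = 0 := sub_eq_zero.2 ((hF j).trans ((hF i).trans heq).symm)
    rw [hjump, zero_mul, zero_mul]
  · have hlt' : (f ∘ e') i < (f ∘ e') j := hsorted ▸ hlt
    rw [show k + 1 = (j : ℕ) from rfl, upSet_eq_filter_le f e h rfl hlt,
      upSet_eq_filter_le f e' h' rfl hlt', ← Function.comp_apply (f := f), hsorted,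
      Function.comp_apply]

end

theorem choquet_similarity_symmetrized_eq_measure_sub_distance_general
    {I A : Type*} [Fintype A] [DecidableEq A] {n : ℕ}
    (val : A → I → ℝ)
    (μ : Finset A → ℝ) (hμ_empty : μ ∅ = 0)
    (x y : I)
    (e₁ : Fin n ≃ A) (hsort₁ : Monotone (fun i => 1 - |val (e₁ i) x - val (e₁ i) y|))
    (e₂ : Fin n ≃ A) (hsort₂ : Monotone (fun i => |val (e₂ i) x - val (e₂ i) y|)) :
    choquetSum (fun S => (μ S + dualMeasure μ S) / 2)
        (fun a => 1 - |val a x - val a y|) e₁ =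
      μ Finset.univ -
        choquetSum (fun S => (μ S + dualMeasure μ S) / 2)
          (fun a => |val a x - val a y|) e₂ := by
  set ν : Finset A → ℝ := fun S => (μ S + dualMeasure μ S) / 2
  set d : A → ℝ := fun a => |val a x - val a y|
  have hν_empty : ν ∅ = 0 := by simp [ν, dualMeasure, hμ_empty]
  have hν_univ : ν univ = μ univ := by simp [ν, dualMeasure, hμ_empty]
  have hsort_rev : Monotone (d ∘ Fin.revPerm.trans e₁) := fun _ _ hij =>
    (sub_le_sub_iff_left 1).1 (hsort₁ (Fin.rev_le_rev.2 hij))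
  calc choquetSum ν (fun a => 1 - d a) e₁
      = ν univ - choquetSum (dualMeasure ν) d e₁ := by
        rw [choquetSum_sub, choquetSum_const, hν_empty, dualMeasure_symmetrized hμ_empty]; ring
    _ = μ univ - choquetSum ν d e₂ := by
        rw [hν_univ, ← choquetSum_revPerm_trans, choquetSum_eq_of_monotone ν d hsort_rev hsort₂]

/-- For a normalized monotone measure `μ` on a finite nonempty set of
attributes `a : X → [0,1]`, with symmetrized measure `μ^s := (μ + μ̄)/2`, the Choquet
similarity and distance satisfy `R^{μ^s}(x,y) = μ(𝒜) − d^{μ^s}(x,y)`. -/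
theorem choquet_similarity_symmetrized_eq_measure_sub_distance
    {I A : Type*} [Fintype A] [DecidableEq A] {n : ℕ} (hn : 0 < n)
    (val : A → I → ℝ) (hval : ∀ a x, val a x ∈ Set.Icc (0 : ℝ) 1)
    (μ : Finset A → ℝ) (hμ_empty : μ ∅ = 0)
    (hμ_mono : ∀ S T : Finset A, S ⊆ T → μ S ≤ μ T)
    (hμ_norm : μ Finset.univ = 1)
    (x y : I)
    (e₁ : Fin n ≃ A) (hsort₁ : Monotone (fun i => 1 - |val (e₁ i) x - val (e₁ i) y|))
    (e₂ : Fin n ≃ A) (hsort₂ : Monotone (fun i => |val (e₂ i) x - val (e₂ i) y|)) :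
    choquetSum (fun S => (μ S + dualMeasure μ S) / 2)
        (fun a => 1 - |val a x - val a y|) e₁ =
      μ Finset.univ -
        choquetSum (fun S => (μ S + dualMeasure μ S) / 2)
          (fun a => |val a x - val a y|) e₂ :=
  choquet_similarity_symmetrized_eq_measure_sub_distance_general val μ hμ_empty x y e₁ hsort₁ e₂
    hsort₂
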